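/- (Proposition 2, first claim) Let T be a probability tree, θ ∈ Θ_T, and let v_i, v_s be inner vertices. For j < κ_i set η_{ij} = log(θ_{ij} N_{ij}(θ)/N_i(θ)) and define η_{iκ_i} = 0; set ξ_{ab} = exp(η_{ab}) and P_{ab} = Σ_r ∏_{c,d} ξ_{cd}^{α_{cd}(r)} summed over v_{ab}-to-leaf paths r. Then θ_{ij} = θ_{sj} for all j (i.e. v_i and v_s may be placed in the same stage) if and only if κ_i = κ_s =: κ and for all j = 1,…,κ the equality η_{ij} + log P_{ij} + log P_{sκ} = η_{sj} + log P_{sj} + log P_{iκ} holds. -/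

import Mathlib

namespace StagedTrees

/-- A finite directed rooted tree in which every inner vertex has at least two children. -/
inductive Tree : Type where
  | leaf : Tree
  | node : (κ : ℕ) → 2 ≤ κ → (Fin κ → Tree) → Tree

/-- Reindex a label function `θ` to the subtree rooted at the vertex with address `v`. -/
def shift (θ : List ℕ → ℕ → ℝ) (v : List ℕ) : List ℕ → ℕ → ℝ :=
  fun w j => θ (v ++ w) j

/-- The number of outgoing edges of the vertex with address `v` (`0` for leaves and
invalid addresses). -/
def degree : Tree → List ℕ → ℕ
  | .leaf, _ => 0
  | .node κ _ _, [] => κ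
  | .node κ _ c, a :: v => if h : a < κ then degree (c ⟨a, h⟩) v else 0

/-- The subtree rooted at the vertex with address `v`. -/
def subtreeAt : Tree → List ℕ → Tree
  | t, [] => t
  | .leaf, _ :: _ => .leaf
  | .node κ _ c, a :: v => if h : a < κ then subtreeAt (c ⟨a, h⟩) v else .leaf

/-- `v` is the address of a vertex of the tree. -/
def isValid : Tree → List ℕ → Prop
  | _, [] => True
  | .leaf, _ :: _ => False
  | .node κ _ c, a :: v => ∃ h : a < κ, isValid (c ⟨a, h⟩) v

/-- The list of all root-to-leaf paths of the tree, encoded as lists of edge indices. -/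
def leaves : Tree → List (List ℕ)
  | .leaf => [[]]
  | .node κ _ c => (List.finRange κ).flatMap fun a => (leaves (c a)).map (a.val :: ·)

/-- The atomic probability of a root-to-leaf path: the product of the labels of the
edges along the path. -/
def prob (θ : List ℕ → ℕ → ℝ) : Tree → List ℕ → ℝ
  | .leaf, [] => 1
  | .leaf, _ :: _ => 0
  | .node _ _ _, [] => 0
  | .node κ _ c, a :: x =>
      if h : a < κ then θ [] a * prob (shift θ [a]) (c ⟨a, h⟩) x else 0

/-- `θ` is an admissible labelling: at every inner vertex all labels lie in `(0,1)` and
sum to one. -/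
def Admissible (θ : List ℕ → ℕ → ℝ) : Tree → Prop
  | .leaf => True
  | .node κ _ c =>
      (∀ j : Fin κ, θ [] (j : ℕ) ∈ Set.Ioo (0 : ℝ) 1) ∧
      (∑ j : Fin κ, θ [] (j : ℕ)) = 1 ∧
      ∀ a : Fin κ, Admissible (shift θ [(a : ℕ)]) (c a)

/-- The product of the labels along the all-downward path from the root of the tree to a
leaf, where the downward edge of a vertex with `κ` outgoing edges is the edge with
index `κ - 1`. -/
def N (θ : List ℕ → ℕ → ℝ) : Tree → ℝ
  | .leaf => 1
  | .node κ h c => θ [] (κ - 1) * N (shift θ [κ - 1]) (c ⟨κ - 1, by omega⟩)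

/-- `N` of the vertex with address `v`. -/
def Nvert (θ : List ℕ → ℕ → ℝ) (T : Tree) (v : List ℕ) : ℝ :=
  N (shift θ v) (subtreeAt T v)


/-- The sum, over all root-to-leaf paths `r` of a tree, of the product of the values of
`f` along `r`. -/
noncomputable def pathSum (f : List ℕ → ℕ → ℝ) : Tree → ℝ
  | .leaf => 1
  | .node κ _ c => ∑ a : Fin κ, f [] (a : ℕ) * pathSum (shift f [(a : ℕ)]) (c a)

/-- The reparametrized labels `ξ_{ab} = θ_{ab} N_{ab}(θ)/N_a(θ) = exp(η_{ab})`. -/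
noncomputable def xi (θ : List ℕ → ℕ → ℝ) (T : Tree) : List ℕ → ℕ → ℝ :=
  fun v j => θ v j * Nvert θ T (v ++ [j]) / Nvert θ T v

/-- The natural parameters `η_{ij}(θ) = log(θ_{ij} N_{ij}(θ)/N_i(θ))` for `j < κ_i - 1`,
extended by the convention `η_{iκ_i} = 0` on the downward edge. -/
noncomputable def etaOf (θ : List ℕ → ℕ → ℝ) (T : Tree) (v : List ℕ) (j : ℕ) : ℝ :=
  if j + 1 = degree T v then 0 else Real.log (xi θ T v j)

/-- `P_{ij} = Σ_r ∏_{a,b} ξ_{ab}^{α_{ab}(r)}`, the sum over all `v_{ij}`-to-leaf paths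
`r` of the products of the `ξ`-labels along `r`. -/
noncomputable def P (θ : List ℕ → ℕ → ℝ) (T : Tree) (v : List ℕ) (j : ℕ) : ℝ :=
  pathSum (shift (xi θ T) (v ++ [j])) (subtreeAt T (v ++ [j]))

/-! ### Auxiliary lemmas -/

/-- The number of outgoing edges at the root. -/
def rootDeg : Tree → ℕ
  | .leaf => 0
  | .node κ _ _ => κ

theorem shift_nil (θ : List ℕ → ℕ → ℝ) : shift θ [] = θ := rfl

theorem shift_append (θ : List ℕ → ℕ → ℝ) (v w : List ℕ) :
    shift θ (v ++ w) = shift (shift θ v) w := by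
  funext x j; simp [shift, List.append_assoc]

theorem subtreeAt_leaf (v : List ℕ) : subtreeAt .leaf v = .leaf := by
  cases v <;> rfl

theorem subtreeAt_nil (t : Tree) : subtreeAt t [] = t := by
  cases t <;> rfl

theorem isValid_nil (t : Tree) : isValid t [] := by
  cases t <;> trivial

theorem subtreeAt_append (v w : List ℕ) (t : Tree) :
    subtreeAt t (v ++ w) = subtreeAt (subtreeAt t v) w := by
  induction v generalizing t with
  | nil => rw [List.nil_append, subtreeAt_nil]
  | cons a v ih =>
    cases t with
    | leaf => simp [subtreeAt, subtreeAt_leaf]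
    | node κ h c =>
      simp only [List.cons_append, subtreeAt]
      by_cases ha : a < κ
      · simp [ha, ih]
      · simp [ha, subtreeAt_leaf]

theorem degree_eq_rootDeg (t : Tree) (v : List ℕ) :
    degree t v = rootDeg (subtreeAt t v) := by
  induction v generalizing t with
  | nil => cases t <;> rfl
  | cons a v ih =>
    cases t with
    | leaf => simp [degree, subtreeAt, rootDeg]
    | node κ h c =>
      simp only [degree, subtreeAt]
      by_cases ha : a < κ
      · simp [ha, ih]
      · simp [ha, rootDeg]

theorem admissible_subtree {θ : List ℕ → ℕ → ℝ} {t : Tree} {v : List ℕ}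
    (h : Admissible θ t) (hv : isValid t v) :
    Admissible (shift θ v) (subtreeAt t v) := by
  induction v generalizing t θ with
  | nil => rw [subtreeAt_nil]; exact h
  | cons a v ih =>
    cases t with
    | leaf => exact absurd hv (by simp [isValid])
    | node κ hκ c =>
      obtain ⟨ha, hv'⟩ := hv
      have := ih (h.2.2 ⟨a, ha⟩) hv'
      rw [show (a :: v) = [a] ++ v from rfl, shift_append]
      simpa [subtreeAt, ha] using this

theorem isValid_append {t : Tree} {v : List ℕ} {j : ℕ} (hv : isValid t v)
    (hj : j < degree t v) : isValid t (v ++ [j]) := by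
  induction v generalizing t with
  | nil =>
    cases t with
    | leaf => simp [degree] at hj
    | node κ h c => exact ⟨by simpa [degree] using hj, isValid_nil _⟩
  | cons a v ih =>
    cases t with
    | leaf => exact absurd hv (by simp [isValid])
    | node κ h c =>
      obtain ⟨ha, hv'⟩ := hv
      have hj' : j < degree (c ⟨a, ha⟩) v := by simpa [degree, ha] using hj
      exact ⟨ha, ih hv' hj'⟩

theorem N_pos : ∀ (t : Tree) (θ : List ℕ → ℕ → ℝ), Admissible θ t → 0 < N θ t := by
  intro t
  induction t with
  | leaf => intro θ _; simp [N]
  | node κ h c ih =>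
    intro θ hθ
    have h1 := hθ.1 ⟨κ - 1, by omega⟩
    exact mul_pos h1.1 (ih _ _ (hθ.2.2 ⟨κ - 1, by omega⟩))

theorem shift_xi (θ : List ℕ → ℕ → ℝ) (t : Tree) (v : List ℕ) :
    shift (xi θ t) v = xi (shift θ v) (subtreeAt t v) := by
  funext x j
  simp only [shift, xi, Nvert, ← shift_append, ← subtreeAt_append, List.append_assoc]

theorem pathSum_xi :
    ∀ (t : Tree) (θ : List ℕ → ℕ → ℝ), Admissible θ t →
      pathSum (xi θ t) t = (N θ t)⁻¹ := by
  intro t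
  induction t with
  | leaf => intro θ _; simp [pathSum, N]
  | node κ h c ih =>
    intro θ hθ
    have hNt : 0 < N θ (.node κ h c) := N_pos _ _ hθ
    rw [pathSum]
    have key : ∀ a : Fin κ, xi θ (.node κ h c) [] (a : ℕ) *
        pathSum (shift (xi θ (.node κ h c)) [(a : ℕ)]) (c a) =
        θ [] (a : ℕ) * (N θ (.node κ h c))⁻¹ := by
      intro a
      have hsub : subtreeAt (Tree.node κ h c) [(a : ℕ)] = c a := by
        simp [subtreeAt, a.isLt]
      have hNa : 0 < N (shift θ [(a : ℕ)]) (c a) := N_pos _ _ (hθ.2.2 a)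
      rw [shift_xi, hsub, ih a _ (hθ.2.2 a)]
      have hxi : xi θ (.node κ h c) [] (a : ℕ) =
          θ [] (a : ℕ) * N (shift θ [(a : ℕ)]) (c a) / N θ (.node κ h c) := by
        simp [xi, Nvert, shift_nil, hsub, subtreeAt_nil]
      rw [hxi]
      field_simp
    simp only [key]
    rw [← Finset.sum_mul, hθ.2.1, one_mul]

theorem Nvert_pos {θ : List ℕ → ℕ → ℝ} {T : Tree} {v : List ℕ}
    (hθ : Admissible θ T) (hv : isValid T v) : 0 < Nvert θ T v :=
  N_pos _ _ (admissible_subtree hθ hv)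

theorem P_eq {θ : List ℕ → ℕ → ℝ} {T : Tree} {v : List ℕ} {j : ℕ}
    (hθ : Admissible θ T) (hv : isValid T v) (hj : j < degree T v) :
    P θ T v j = (Nvert θ T (v ++ [j]))⁻¹ := by
  have hval := isValid_append hv hj
  rw [P, shift_xi, pathSum_xi _ _ (admissible_subtree hθ hval)]
  rfl

theorem theta_mem {θ : List ℕ → ℕ → ℝ} {T : Tree} {v : List ℕ} {j : ℕ}
    (hθ : Admissible θ T) (hv : isValid T v) (hj : j < degree T v) :
    θ v j ∈ Set.Ioo (0 : ℝ) 1 := by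
  have h := admissible_subtree hθ hv
  rw [degree_eq_rootDeg] at hj
  cases hsub : subtreeAt T v with
  | leaf => rw [hsub] at hj; simp [rootDeg] at hj
  | node κ hκ c =>
    rw [hsub] at h hj
    have := h.1 ⟨j, hj⟩
    simpa [shift] using this

theorem theta_sum {θ : List ℕ → ℕ → ℝ} {T : Tree} {v : List ℕ} {κ : ℕ}
    {hκ : 2 ≤ κ} {c : Fin κ → Tree} (hθ : Admissible θ T) (hv : isValid T v)
    (hsub : subtreeAt T v = Tree.node κ hκ c) : ∑ j : Fin κ, θ v (j : ℕ) = 1 := by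
  have h := admissible_subtree hθ hv
  rw [hsub] at h
  have := h.2.1
  simpa [shift] using this

theorem Nvert_down {θ : List ℕ → ℕ → ℝ} {T : Tree} {v : List ℕ} {κ : ℕ}
    {hκ : 2 ≤ κ} {c : Fin κ → Tree} (hsub : subtreeAt T v = Tree.node κ hκ c) :
    Nvert θ T v = θ v (κ - 1) * Nvert θ T (v ++ [κ - 1]) := by
  have hc : subtreeAt T (v ++ [κ - 1]) = c ⟨κ - 1, by omega⟩ := by
    rw [subtreeAt_append, hsub]
    simp [subtreeAt, Nat.sub_lt (by omega : 0 < κ) one_pos]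
  rw [Nvert, Nvert, hsub, N, hc, shift_append]
  simp [shift]

theorem eta_log {θ : List ℕ → ℕ → ℝ} {T : Tree} {v : List ℕ} {κ : ℕ}
    (hθ : Admissible θ T) (hv : isValid T v)
    (hd : degree T v = κ) (hκ : 0 < κ) {j : ℕ} (hj : j < κ) :
    etaOf θ T v j + Real.log (P θ T v j) =
      Real.log (θ v j) - Real.log (θ v (κ - 1)) + Real.log (P θ T v (κ - 1)) := by
  have hκ1 : κ - 1 < κ := by omega
  rcases eq_or_ne (j + 1) κ with hcase | hcase
  · have hjκ : j = κ - 1 := by omega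
    subst hjκ
    rw [etaOf, if_pos (by omega)]
    ring
  · -- subtree shape
    have hroot : rootDeg (subtreeAt T v) = κ := by
      rw [← degree_eq_rootDeg, hd]
    obtain ⟨hκ2, c, hsub⟩ : ∃ (hκ2 : 2 ≤ κ) (c : Fin κ → Tree),
        subtreeAt T v = Tree.node κ hκ2 c := by
      cases hs : subtreeAt T v with
      | leaf => rw [hs] at hroot; simp [rootDeg] at hroot; omega
      | node κ' hκ' c =>
        rw [hs] at hroot; simp only [rootDeg] at hroot
        subst hroot; exact ⟨hκ', c, rfl⟩
    have hθj : 0 < θ v j := (theta_mem hθ hv (by omega)).1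
    have hθκ : 0 < θ v (κ - 1) := (theta_mem hθ hv (by omega)).1
    have hNj : 0 < Nvert θ T (v ++ [j]) :=
      Nvert_pos hθ (isValid_append hv (by omega))
    have hNκ : 0 < Nvert θ T (v ++ [κ - 1]) :=
      Nvert_pos hθ (isValid_append hv (by omega))
    rw [etaOf, if_neg (by omega), P_eq hθ hv (by omega), P_eq hθ hv (by omega)]
    have hxi : xi θ T v j = θ v j * Nvert θ T (v ++ [j]) / Nvert θ T v := rfl
    rw [hxi, Nvert_down (θ := θ) hsub]
    rw [Real.log_div (by positivity) (by positivity), Real.log_mul hθj.ne' hNj.ne',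
      Real.log_mul hθκ.ne' hNκ.ne', Real.log_inv, Real.log_inv]
    ring

/-- Proposition 2, first claim. Two inner vertices `v_i` and `v_s`
of a probability tree carry equal label vectors (i.e. they may be placed in the same
stage) if and only if they have the same number `κ` of outgoing edges and for every
edge `j` the equality
`η_{ij} + log P_{ij} + log P_{sκ} = η_{sj} + log P_{sj} + log P_{iκ}` holds. -/
theorem stage_iff_natural_parameter_equations (T : Tree) (θ : List ℕ → ℕ → ℝ)
    (hθ : Admissible θ T) (u w : List ℕ)
    (hu : isValid T u) (hw : isValid T w)
    (hu' : 0 < degree T u) (hw' : 0 < degree T w) :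
    ((degree T u = degree T w ∧ ∀ j < degree T u, θ u j = θ w j) ↔
      (degree T u = degree T w ∧ ∀ j < degree T u,
        etaOf θ T u j + Real.log (P θ T u j) +
            Real.log (P θ T w (degree T u - 1)) =
          etaOf θ T w j + Real.log (P θ T w j) +
            Real.log (P θ T u (degree T u - 1)))) := by
  apply and_congr_right
  intro hd
  set κ := degree T u with hκdef
  have hdw : degree T w = κ := hd.symm
  have hκpos : 0 < κ := hu'
  have hκ1 : κ - 1 < κ := by omega
  -- positivity of labels
  have hθuj : ∀ j < κ, 0 < θ u j := fun j hj => (theta_mem hθ hu (by omega)).1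
  have hθwj : ∀ j < κ, 0 < θ w j := fun j hj => (theta_mem hθ hw (by omega)).1
  constructor
  · intro hθeq j hj
    have ku := eta_log (κ := κ) hθ hu rfl hκpos hj
    have kw := eta_log (κ := κ) hθ hw hdw hκpos hj
    rw [hθeq j hj, hθeq (κ - 1) hκ1] at ku
    linarith [ku, kw]
  · intro heq
    -- products are equal
    have hprod : ∀ j < κ, θ u j * θ w (κ - 1) = θ w j * θ u (κ - 1) := by
      intro j hj
      have ku := eta_log (κ := κ) hθ hu rfl hκpos hj
      have kw := eta_log (κ := κ) hθ hw hdw hκpos hj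
      have hlog : Real.log (θ u j) + Real.log (θ w (κ - 1)) =
          Real.log (θ w j) + Real.log (θ u (κ - 1)) := by
        have h := heq j hj
        linarith [ku, kw, h]
      have hlog' : Real.log (θ u j * θ w (κ - 1)) =
          Real.log (θ w j * θ u (κ - 1)) := by
        rw [Real.log_mul (hθuj j hj).ne' (hθwj _ hκ1).ne',
          Real.log_mul (hθwj j hj).ne' (hθuj _ hκ1).ne']
        exact hlog
      have := congrArg Real.exp hlog'
      rwa [Real.exp_log (mul_pos (hθuj j hj) (hθwj _ hκ1)),
        Real.exp_log (mul_pos (hθwj j hj) (hθuj _ hκ1))] at this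
    -- get the subtree shapes to sum the labels
    have hrootu : rootDeg (subtreeAt T u) = κ := by rw [← degree_eq_rootDeg]
    have hrootw : rootDeg (subtreeAt T w) = κ := by
      rw [← degree_eq_rootDeg]; exact hdw
    obtain ⟨hκu, cu, hsubu⟩ : ∃ (hκ2 : 2 ≤ κ) (c : Fin κ → Tree),
        subtreeAt T u = Tree.node κ hκ2 c := by
      cases hs : subtreeAt T u with
      | leaf => rw [hs] at hrootu; simp [rootDeg] at hrootu; omega
      | node κ' hκ' c =>
        rw [hs] at hrootu; simp only [rootDeg] at hrootu
        subst hrootu; exact ⟨hκ', c, rfl⟩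
    obtain ⟨hκw, cw, hsubw⟩ : ∃ (hκ2 : 2 ≤ κ) (c : Fin κ → Tree),
        subtreeAt T w = Tree.node κ hκ2 c := by
      cases hs : subtreeAt T w with
      | leaf => rw [hs] at hrootw; simp [rootDeg] at hrootw; omega
      | node κ' hκ' c =>
        rw [hs] at hrootw; simp only [rootDeg] at hrootw
        subst hrootw; exact ⟨hκ', c, rfl⟩
    have hsumu : ∑ j : Fin κ, θ u (j : ℕ) = 1 := theta_sum hθ hu hsubu
    have hsumw : ∑ j : Fin κ, θ w (j : ℕ) = 1 := theta_sum hθ hw hsubw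
    have hsum : (∑ j : Fin κ, θ u (j : ℕ)) * θ w (κ - 1) =
        (∑ j : Fin κ, θ w (j : ℕ)) * θ u (κ - 1) := by
      rw [Finset.sum_mul, Finset.sum_mul]
      exact Finset.sum_congr rfl fun j _ => hprod j j.isLt
    rw [hsumu, hsumw, one_mul, one_mul] at hsum
    intro j hj
    have := hprod j hj
    rw [hsum] at this
    exact mul_right_cancel₀ (hθuj _ hκ1).ne' this

end StagedTrees
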